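/- arXiv:1708.04974 — 2 statements merged into one kernel-verified Lean document; each statement's English description precedes it below -/
import Mathlib

section
/- If k is odd and n ≥ 2, then each relation R_i is asymmetric: for all x, y ∈ ℤ/pℤ and every integer i, if (x, y) ∈ R_i then (y, x) ∉ R_i. -/
/-- If `k` is odd and `n ≥ 2`, each relation `R i` is asymmetric.
Context: `p = n*k + 1` an odd prime, `g` a primitive root mod `p`,
`X i = {g^(a*n + i) : 0 ≤ a < k} ⊆ ℤ/pℤ`, and
`R i = {(x, y) : x − y ∈ X i}`. -/
theorem R_asymmetric
    (p n k : ℕ) (hp : p.Prime) (hpodd : Odd p)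
    (hn : 2 ≤ n) (hk : 0 < k) (hpnk : p = n * k + 1)
    (hkodd : Odd k)
    (g : (ZMod p)ˣ) (hg : ∀ x : (ZMod p)ˣ, x ∈ Subgroup.zpowers g)
    (X : ℤ → Set (ZMod p))
    (hX : ∀ i : ℤ, X i =
      {x : ZMod p | ∃ a : ℕ, a < k ∧ x = ((g ^ ((a : ℤ) * (n : ℤ) + i) : (ZMod p)ˣ) : ZMod p)})
    (R : ℤ → Set (ZMod p × ZMod p))
    (hR : ∀ i : ℤ, R i = {q : ZMod p × ZMod p | q.1 - q.2 ∈ X i}) :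
    ∀ (x y : ZMod p) (i : ℤ), (x, y) ∈ R i → (y, x) ∉ R i := by
  haveI : Fact p.Prime := ⟨hp⟩
  haveI : Fact (2 < p) := ⟨by
    obtain ⟨m, hm⟩ := hpodd
    have := hp.two_le
    omega⟩
  intro x y i hxy hyx
  rw [hR] at hxy hyx
  rw [hX] at hxy hyx
  obtain ⟨a, ha, hax⟩ := hxy
  obtain ⟨b, hb, hbx⟩ := hyx
  -- From x - y = g^(a n + i) and y - x = g^(b n + i):
  have hsum : ((g ^ ((a : ℤ) * n + i) : (ZMod p)ˣ) : ZMod p)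
      + ((g ^ ((b : ℤ) * n + i) : (ZMod p)ˣ) : ZMod p) = 0 := by
    rw [← hax, ← hbx]; ring
  have hneg : (g ^ ((b : ℤ) * n + i) : (ZMod p)ˣ) = - g ^ ((a : ℤ) * n + i) := by
    apply Units.ext
    rw [Units.val_neg]
    linear_combination hsum
  have hkey : g ^ (((b : ℤ) - a) * n) = (-1 : (ZMod p)ˣ) := by
    have : g ^ ((b : ℤ) * n + i) * (g ^ ((a : ℤ) * n + i))⁻¹
        = (- g ^ ((a : ℤ) * n + i)) * (g ^ ((a : ℤ) * n + i))⁻¹ := by rw [hneg]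
    rw [neg_mul, mul_inv_cancel] at this
    rw [← this, ← zpow_neg, ← zpow_add]
    ring_nf
  have hord : orderOf g = n * k := by
    have h1 : orderOf g = Nat.card (ZMod p)ˣ := orderOf_eq_card_of_forall_mem_zpowers hg
    rw [h1, Nat.card_eq_fintype_card, ZMod.card_units_eq_totient, Nat.totient_prime hp, hpnk]
    omega
  have hne : (-1 : (ZMod p)ˣ) ≠ 1 := by
    intro h
    have := congrArg (Units.val) h
    simp at this
    exact (ZMod.neg_one_ne_one this)
  -- g^(2e) = 1 where e = (b-a)*n
  have h2 : g ^ (2 * (((b : ℤ) - a) * n)) = 1 := by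
    rw [mul_comm, zpow_mul, hkey, zpow_two, neg_one_mul, neg_neg]
  have hdvd : ((n : ℤ) * k) ∣ 2 * (((b : ℤ) - a) * n) := by
    have := (orderOf_dvd_iff_zpow_eq_one).2 h2
    rwa [hord, Nat.cast_mul] at this
  have hn0 : (n : ℤ) ≠ 0 := by positivity
  -- cancel n : k ∣ (b-a)*2
  have hk2 : (k : ℤ) ∣ ((b : ℤ) - a) * 2 := by
    have h' : ((k : ℤ)) * n ∣ (((b : ℤ) - a) * 2) * n := by
      rw [show (((b : ℤ) - a) * 2) * n = 2 * (((b : ℤ) - a) * n) by ring, mul_comm]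
      exact hdvd
    exact (mul_dvd_mul_iff_right hn0).1 h'
  obtain ⟨m, hm⟩ := hkodd
  have hcop : IsCoprime ((k : ℤ)) 2 := ⟨1, -m, by push_cast [hm]; ring⟩
  have hkba : (k : ℤ) ∣ ((b : ℤ) - a) := hcop.dvd_of_dvd_mul_right hk2
  have : ((n : ℤ) * k) ∣ (((b : ℤ) - a) * n) := by
    obtain ⟨c, hc⟩ := hkba
    exact ⟨c, by rw [hc]; ring⟩
  have hone : g ^ (((b : ℤ) - a) * n) = 1 := by
    apply (orderOf_dvd_iff_zpow_eq_one).1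
    rwa [hord, Nat.cast_mul]
  rw [hone] at hkey
  exact hne hkey.symm
end

section
/- Suppose k is odd and n = 2m. Then for all integers i and j, X_j ⊆ X_0 + X_i if and only if X_{i+m} ⊆ X_0 + X_{j+m}, where X_0 + X_a = {x + y : x ∈ X_0, y ∈ X_a} in ℤ/pℤ. -/
open scoped Pointwise

/-- Asymmetric case equivalence: if `k` is odd and `n = 2m`, then
`X j ⊆ X 0 + X i ↔ X (i+m) ⊆ X 0 + X (j+m)`.
Context: `p = n*k + 1` an odd prime, `g` a primitive root mod `p`,
`X i = {g^(a*n + i) : 0 ≤ a < k} ⊆ ℤ/pℤ`. -/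
theorem sumset_containment_swap
    (p n k m : ℕ) (hp : p.Prime) (hpodd : Odd p)
    (hn : 0 < n) (hk : 0 < k) (hpnk : p = n * k + 1)
    (hkodd : Odd k) (hm : n = 2 * m)
    (g : (ZMod p)ˣ) (hg : ∀ x : (ZMod p)ˣ, x ∈ Subgroup.zpowers g)
    (X : ℤ → Set (ZMod p))
    (hX : ∀ i : ℤ, X i =
      {x : ZMod p | ∃ a : ℕ, a < k ∧ x = ((g ^ ((a : ℤ) * (n : ℤ) + i) : (ZMod p)ˣ) : ZMod p)}) :
    ∀ i j : ℤ, X j ⊆ X 0 + X i ↔ X (i + m) ⊆ X 0 + X (j + m) := by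
  haveI : Fact p.Prime := ⟨hp⟩
  set G : ℤ → ZMod p := fun z => ((g ^ z : (ZMod p)ˣ) : ZMod p) with hGdef
  have hG : ∀ z w : ℤ, G (z + w) = G z * G w := fun z w => by
    simp only [hGdef]
    rw [zpow_add]
    exact Units.val_mul _ _
  have hm0 : 0 < m := by omega
  have hord : orderOf g = n * k := by
    rw [orderOf_eq_card_of_forall_mem_zpowers hg, Nat.card_eq_fintype_card, ZMod.card_units, hpnk]
    omega
  have hone : g ^ (n * k) = 1 := by rw [← hord]; exact pow_orderOf_eq_one g
  have hzone : ∀ c : ℤ, g ^ (c * ((n * k : ℕ) : ℤ)) = 1 := fun c => by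
    rw [mul_comm c, zpow_mul, zpow_natCast, hone, one_zpow]
  -- reduction of exponents mod k
  have hred : ∀ t : ℤ, ∃ a : ℕ, a < k ∧ (g ^ (t * (n : ℤ)) : (ZMod p)ˣ) = g ^ ((a : ℤ) * n) := by
    intro t
    have hk' : (0 : ℤ) < (k : ℤ) := by exact_mod_cast hk
    refine ⟨(t % k).toNat, ?_, ?_⟩
    · have h1 : t % (k : ℤ) < k := Int.emod_lt_of_pos t hk'
      have h2 : 0 ≤ t % (k : ℤ) := Int.emod_nonneg t (by omega)
      omega
    · have ha : ((( t % k).toNat : ℤ)) = t % k :=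
        Int.toNat_of_nonneg (Int.emod_nonneg t (by omega))
      have he : t * (n : ℤ) = (((t % k).toNat : ℤ)) * n + (t / k) * ((n * k : ℕ) : ℤ) := by
        rw [ha, Int.emod_def]
        push_cast
        ring
      rw [he, zpow_add, hzone, mul_one]
  -- g^(m*k) = -1
  have hneg : G ((m : ℤ) * k) = -1 := by
    have hmk : 0 < m * k := Nat.mul_pos hm0 hk
    have h2 : (g ^ (m * k)) ^ 2 = 1 := by
      rw [← pow_mul, show m * k * 2 = n * k by rw [hm]; ring, hone]
    have h2' : ((g ^ (m * k) : (ZMod p)ˣ) : ZMod p) ^ 2 = 1 := by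
      simpa using congrArg Units.val h2
    rcases sq_eq_one_iff.mp h2' with h | h
    · exfalso
      have hu : (g ^ (m * k) : (ZMod p)ˣ) = 1 := Units.val_eq_one.mp h
      have hd := orderOf_dvd_of_pow_eq_one hu
      rw [hord] at hd
      have hle := Nat.le_of_dvd hmk hd
      have hq : n * k = 2 * (m * k) := by rw [hm]; ring
      omega
    · have : G ((m : ℤ) * k) = ((g ^ (m * k) : (ZMod p)ˣ) : ZMod p) := by
        rw [hGdef]
        simp only
        rw [show ((m : ℤ) * k) = ((m * k : ℕ) : ℤ) by push_cast; ring, zpow_natCast]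
      rw [this, h]
  -- characterization of the containment
  have hchar : ∀ i j : ℤ, (X j ⊆ X 0 + X i ↔
      ∃ a b : ℤ, G j = G (a * n) + G (b * n + i)) := by
    intro i j
    constructor
    · intro h
      have hj : ((g ^ j : (ZMod p)ˣ) : ZMod p) ∈ X j := by
        rw [hX]
        exact ⟨0, hk, by norm_num⟩
      obtain ⟨x, hx, y, hy, hxy⟩ := Set.mem_add.mp (h hj)
      rw [hX] at hx hy
      obtain ⟨a, ha, rfl⟩ := hx
      obtain ⟨b, hb, rfl⟩ := hy
      refine ⟨a, b, ?_⟩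
      rw [hGdef]
      simp only
      rw [← hxy, add_zero ((a : ℤ) * (n : ℤ))]
    · rintro ⟨a, b, hab⟩ x hx
      rw [hX] at hx
      obtain ⟨c, hc, rfl⟩ := hx
      obtain ⟨a', ha', haeq⟩ := hred ((c : ℤ) + a)
      obtain ⟨b', hb', hbeq⟩ := hred ((c : ℤ) + b)
      rw [Set.mem_add]
      refine ⟨G ((a' : ℤ) * n + 0), ?_, G ((b' : ℤ) * n + i), ?_, ?_⟩
      · rw [hX]; exact ⟨a', ha', rfl⟩
      · rw [hX]; exact ⟨b', hb', rfl⟩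
      · have e1 : G ((a' : ℤ) * n) = G ((c : ℤ) * n) * G ((a : ℤ) * n) := by
          have : G (((c : ℤ) + a) * n) = G ((a' : ℤ) * n) := congrArg Units.val haeq
          rw [← this, show ((c : ℤ) + a) * (n : ℤ) = (c : ℤ) * n + (a : ℤ) * n by ring, hG]
        have e2 : G ((b' : ℤ) * n) = G ((c : ℤ) * n) * G ((b : ℤ) * n) := by
          have : G (((c : ℤ) + b) * n) = G ((b' : ℤ) * n) := congrArg Units.val hbeq
          rw [← this, show ((c : ℤ) + b) * (n : ℤ) = (c : ℤ) * n + (b : ℤ) * n by ring, hG]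
        show G ((a' : ℤ) * n + 0) + G ((b' : ℤ) * n + i) = G ((c : ℤ) * n + j)
        rw [add_zero, hG, hG, e1, e2, hab, hG]
        ring
  -- the swap implication
  obtain ⟨t, ht⟩ := hkodd
  have hswap : ∀ i j : ℤ, (∃ a b : ℤ, G j = G (a * n) + G (b * n + i)) →
      (∃ a b : ℤ, G (i + m) = G (a * n) + G (b * n + (j + m))) := by
    rintro i j ⟨a, b, hab⟩
    have hnZ : (n : ℤ) = 2 * m := by exact_mod_cast hm
    have hkZ : (k : ℤ) = 2 * t + 1 := by exact_mod_cast ht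
    refine ⟨a - b + t + 1, -b, ?_⟩
    have h1 : G ((a - b + (t : ℤ) + 1) * n) = -(G (m : ℤ) * G (-(b * n)) * G (a * n)) := by
      have he : (a - b + (t : ℤ) + 1) * (n : ℤ) =
          (m : ℤ) * k + ((m : ℤ) + (-(b * (n : ℤ)) + a * n)) := by
        rw [hnZ, hkZ]; ring
      rw [he, hG ((m : ℤ) * k) _, hneg, hG (m : ℤ) _, hG (-(b * (n : ℤ))) _]
      ring
    have h2 : G (-b * n + (j + m)) = G (m : ℤ) * G (-(b * n)) * G j := by
      rw [show -b * (n : ℤ) + (j + (m : ℤ)) = (m : ℤ) + (-(b * (n : ℤ)) + j) by ring,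
        hG (m : ℤ) _, hG (-(b * (n : ℤ))) _]
      ring
    have h3 : G (i + m) = G (m : ℤ) * G (-(b * n)) * G (b * n + i) := by
      rw [show i + (m : ℤ) = (m : ℤ) + (-(b * (n : ℤ)) + (b * n + i)) by ring,
        hG (m : ℤ) _, hG (-(b * (n : ℤ))) _]
      ring
    rw [h3, h1, h2]
    linear_combination -(G (m : ℤ) * G (-(b * (n : ℤ)))) * hab
  -- shifting both indices by n
  have hshift : ∀ i j : ℤ, (∃ a b : ℤ, G (j + n) = G (a * n) + G (b * n + (i + n))) →
      (∃ a b : ℤ, G j = G (a * n) + G (b * n + i)) := by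
    rintro i j ⟨a, b, hab⟩
    refine ⟨a - 1, b, ?_⟩
    have hGj : G j = G (j + n) * G (-(n : ℤ)) := by
      rw [← hG, show j + (n : ℤ) + -(n : ℤ) = j by ring]
    have e1 : G ((a - 1) * n) = G (a * n) * G (-(n : ℤ)) := by
      rw [show (a - 1) * (n : ℤ) = a * n + -(n : ℤ) by ring, hG]
    have e2 : G (b * n + i) = G (b * n + (i + n)) * G (-(n : ℤ)) := by
      rw [show b * (n : ℤ) + i = (b * (n : ℤ) + (i + n)) + -(n : ℤ) by ring, hG]
    rw [hGj, hab, e1, e2]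
    ring
  -- assembling
  intro i j
  rw [hchar i j, hchar (j + (m : ℤ)) (i + (m : ℤ))]
  constructor
  · exact hswap i j
  · intro h
    have h2 := hswap (j + m) (i + m) h
    apply hshift i j
    obtain ⟨a, b, hab⟩ := h2
    have hnZ : (n : ℤ) = 2 * m := by exact_mod_cast hm
    refine ⟨a, b, ?_⟩
    rw [show j + (n : ℤ) = (j + m) + m by rw [hnZ]; ring,
      show b * (n : ℤ) + (i + n) = b * n + ((i + m) + m) by rw [hnZ]; ring]
    exact hab
end
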